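/- arXiv:2310.20394 — 4 statements merged into one kernel-verified Lean document; each statement's English description precedes it below -/
import Mathlib

section
/- Let Γ₁ be a numerical semigroup, n, a coprime positive integers with a ∈ Γ₁ and n ≥ 2, and set Γ = nΓ₁ + aℕ (a gluing). Then the conductor satisfies c(Γ) = n·c(Γ₁) + (n−1)(a−1). -/
/-!
Every element of `Γ = nΓ₁ + aℕ` has a representation `n s + k a` with `k < n`, and since `a` is
invertible mod `n` the coefficient `k` is determined by the residue of the element mod `n`.
Hence `m ∈ Γ` exactly when the `s` of this normalized representation lies in `Γ₁`.
For `m ≥ n c(Γ₁) + (n-1)(a-1)` that `s` is at least `c(Γ₁)`; and the integer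
`n c(Γ₁) + (n-1)(a-1) - 1 = n (c(Γ₁) - 1) + (n-1) a` forces `k = n - 1` and `s = c(Γ₁) - 1 ∉ Γ₁`.
-/

theorem Nat.exists_lt_mul_modEq {n a : ℕ} (hcop : n.Coprime a) (hn : 0 < n) (m : ℕ) :
    ∃ k < n, k * a ≡ m [MOD n] := by
  have : NeZero n := ⟨hn.ne'⟩
  let u := ZMod.unitOfCoprime a hcop.symm
  refine ⟨((m : ZMod n) * ↑u⁻¹).val, ZMod.val_lt _, (ZMod.natCast_eq_natCast_iff _ _ _).mp ?_⟩
  rw [Nat.cast_mul, ZMod.natCast_zmod_val, mul_assoc, ← ZMod.coe_unitOfCoprime a hcop.symm,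
    Units.inv_mul, mul_one]

namespace NumericalSemigroup

noncomputable def conductor (S : Set ℕ) : ℕ := sInf {c | ∀ m, c ≤ m → m ∈ S}

def gluing (Γ₁ : AddSubmonoid ℕ) (n a : ℕ) : Set ℕ := {m | ∃ s ∈ Γ₁, ∃ k : ℕ, m = n * s + k * a}

section Conductor

variable {S : Set ℕ}

theorem mem_of_conductor_le (hS : ∃ c, ∀ m, c ≤ m → m ∈ S) {m : ℕ} (hm : conductor S ≤ m) :
    m ∈ S :=
  Nat.sInf_mem hS m hm

theorem exists_forall_le_mem_of_finite_compl (hS : Sᶜ.Finite) : ∃ c, ∀ m, c ≤ m → m ∈ S := by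
  obtain ⟨b, hb⟩ := hS.bddAbove
  exact ⟨b + 1, fun m hm => by_contra fun hmS => absurd (hb hmS) (by omega)⟩

theorem conductor_sub_one_notMem (h : 0 < conductor S) : conductor S - 1 ∉ S := by
  intro hmem
  have hS : ∃ c, ∀ m, c ≤ m → m ∈ S := Nat.nonempty_of_pos_sInf h
  have hle : conductor S ≤ conductor S - 1 := Nat.sInf_le fun m hm => by
    rcases hm.eq_or_lt with rfl | hlt
    · exact hmem
    · exact mem_of_conductor_le hS (by omega)
  omega

theorem conductor_eq {c : ℕ} (hmem : ∀ m, c ≤ m → m ∈ S) (hgap : 0 < c → c - 1 ∉ S) :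
    conductor S = c := by
  refine le_antisymm (Nat.sInf_le hmem) (not_lt.mp fun hlt => hgap (by omega) ?_)
  exact mem_of_conductor_le ⟨c, hmem⟩ (by omega)

end Conductor

section Gluing

variable {Γ₁ : AddSubmonoid ℕ} {n a : ℕ}

theorem mem_gluing_iff_exists_lt (hn : 0 < n) (haΓ : a ∈ Γ₁) {m : ℕ} :
    m ∈ gluing Γ₁ n a ↔ ∃ s ∈ Γ₁, ∃ k < n, m = n * s + k * a := by
  refine ⟨fun ⟨s, hs, k, hm⟩ => ?_, fun ⟨s, hs, k, _, hm⟩ => ⟨s, hs, k, hm⟩⟩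
  refine ⟨s + (k / n) * a, Γ₁.add_mem hs (by simpa using Γ₁.nsmul_mem haΓ (k / n)),
    k % n, Nat.mod_lt k hn, ?_⟩
  rw [hm]
  nth_rw 1 [← Nat.mod_add_div k n]
  ring

theorem mem_gluing_of_le (hfin : (Γ₁ : Set ℕ)ᶜ.Finite) (hcop : n.Coprime a) (hn : 0 < n)
    (ha : 0 < a) {m : ℕ} (hm : n * conductor (Γ₁ : Set ℕ) + (n - 1) * (a - 1) ≤ m) :
    m ∈ gluing Γ₁ n a := by
  obtain ⟨k, hkn, hk⟩ := Nat.exists_lt_mul_modEq hcop hn m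
  obtain ⟨s, hs⟩ := Nat.modEq_iff_dvd.mp hk
  have hsc : (conductor (Γ₁ : Set ℕ) : ℤ) ≤ s := by
    zify [hn, ha] at hm hkn
    have : (n : ℤ) * (conductor (Γ₁ : Set ℕ) - 1) < n * s := by push_cast at hs; nlinarith
    have := lt_of_mul_lt_mul_left this (by positivity)
    omega
  lift s to ℕ using by omega
  refine ⟨s, mem_of_conductor_le (exists_forall_le_mem_of_finite_compl hfin) (by omega), k, ?_⟩
  push_cast at hs
  omega

theorem sub_one_notMem_gluing (hcop : n.Coprime a) (hn : 0 < n) (ha : 0 < a) (haΓ : a ∈ Γ₁)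
    (hpos : 0 < n * conductor (Γ₁ : Set ℕ) + (n - 1) * (a - 1)) :
    n * conductor (Γ₁ : Set ℕ) + (n - 1) * (a - 1) - 1 ∉ gluing Γ₁ n a := by
  rw [mem_gluing_iff_exists_lt hn haΓ]
  rintro ⟨s, hs, k, hkn, hsk⟩
  have hsum : k * a + n * (s + 1) = (n - 1) * a + n * conductor (Γ₁ : Set ℕ) := by
    zify [hn, ha, hpos] at hsk ⊢
    linear_combination -hsk
  have hmod : k * a ≡ (n - 1) * a [MOD n] := by
    unfold Nat.ModEq
    rw [← Nat.add_mul_mod_self_left _ n (s + 1), hsum, Nat.add_mul_mod_self_left]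
  have hk : k = n - 1 :=
    (hmod.cancel_right_of_coprime hcop).eq_of_lt_of_lt hkn (by omega)
  subst hk
  have hsc : s + 1 = conductor (Γ₁ : Set ℕ) := Nat.eq_of_mul_eq_mul_left hn (by omega)
  exact conductor_sub_one_notMem (S := Γ₁) (by omega) (by rwa [← hsc])

end Gluing

end NumericalSemigroup

open NumericalSemigroup

/-- Delorme's conductor formula for a gluing `Γ = nΓ₁ + aℕ` of a numerical
semigroup `Γ₁` with ℕ: `c(Γ) = n·c(Γ₁) + (n−1)(a−1)`. -/
theorem stmt2 (Γ₁ : AddSubmonoid ℕ) (hfin : (Set.univ \ (Γ₁ : Set ℕ)).Finite)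
    (n a : ℕ) (hn : 2 ≤ n) (ha : 0 < a) (hcop : Nat.Coprime n a) (haΓ : a ∈ Γ₁) :
    sInf {c : ℕ | ∀ m : ℕ, c ≤ m → ∃ s ∈ Γ₁, ∃ k : ℕ, m = n * s + k * a}
      = n * sInf {c : ℕ | ∀ m : ℕ, c ≤ m → m ∈ Γ₁} + (n - 1) * (a - 1) := by
  rw [← Set.compl_eq_univ_sdiff] at hfin
  exact conductor_eq (S := gluing Γ₁ n a) (fun m => mem_gluing_of_le hfin hcop (by omega) ha)
    (sub_one_notMem_gluing hcop (by omega) ha haΓ)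
end

section
/- Let a₀, …, a_g be positive integers with gcd(a₀,…,a_g) = 1, and for each i let e_i = gcd(a₀,…,a_i), n_i = e_{i−1}/e_i (with e₀ = a₀, n₀ = 1). If the semigroup Γ = ⟨a₀,…,a_g⟩ is free, i.e. n_i·a_i ∈ ⟨a₀,…,a_{i−1}⟩ for every i = 1,…,g, then Γ is a complete intersection numerical semigroup; in particular its conductor equals ∑_{i=1}^{g} (n_i − 1)·a_i − a₀ + 1. -/
/-!
Let `e i = gcd (a 0, …, a i)`. Since `n (k + 1)` is the order of `a (k + 1)` modulo `e k`,
an element of `⟨a 0, …, a i⟩` has at most one representation `∑ m j * a j` that is *reduced*,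
i.e. has `m j < n j` for `1 ≤ j ≤ i`; freeness says that such a representation exists.

Write `n_{l+1} a_{l+1} = ∑_{j ≤ l} c_{l,j} a_j` and `f_l = X_{l+1} ^ n_{l+1} - X ^ c_l`.
Dividing by the `f_l` (the `B`-adic weight `∑ d j * B ^ j` of the exponents drops at each step),
every polynomial is congruent modulo `(f_0, …, f_{i-1})` to one with reduced exponents in the
variables `1, …, i`. The substitution `X j ↦ X 0 ^ a j` for `j ≤ i` kills `f_0, …, f_{i-1}` and,
by uniqueness, is injective on reduced polynomials, so its kernel is `(f_0, …, f_{i-1})`. Its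
target is a domain and it does not kill `f_i`, so `f_i` is a nonzerodivisor modulo
`(f_0, …, f_{i-1})`. The same argument for `X j ↦ t ^ a j` gives the kernel of the semigroup ring.

For the conductor, `F = ∑ (n i - 1) a i - a 0` is not in `Γ`, as it would give two reduced
representations of `F + a 0`. Conversely, with `F_i` the same sum truncated at `i`, every
`m > F_i` with `e i ∣ m` lies in `⟨a 0, …, a i⟩`, by induction on `i`: pick `j < n i` with
`m ≡ j a i` modulo `e (i - 1)` and recurse on `m - j a i`.
-/

open MvPolynomial

namespace FreeNumericalSemigroup

open Finset

section Arithmetic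

variable {a e n : ℕ → ℕ}

lemma e_zero (he : ∀ i, e i = (range (i + 1)).gcd a) : e 0 = a 0 := by
  simp [he]

lemma e_succ (he : ∀ i, e i = (range (i + 1)).gcd a) (k : ℕ) :
    e (k + 1) = Nat.gcd (a (k + 1)) (e k) := by
  rw [he, he, range_add_one, gcd_insert]
  rfl

lemma e_dvd (he : ∀ i, e i = (range (i + 1)).gcd a) {i j : ℕ} (hji : j ≤ i) : e i ∣ a j :=
  he i ▸ gcd_dvd (mem_range.2 (Nat.lt_succ_of_le hji))

lemma e_pos (he : ∀ i, e i = (range (i + 1)).gcd a) (ha : 0 < a 0) (i : ℕ) : 0 < e i :=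
  Nat.pos_of_dvd_of_pos (e_dvd he (Nat.zero_le i)) ha

lemma e_dvd_sum (he : ∀ i, e i = (range (i + 1)).gcd a) (m : ℕ → ℕ) (i : ℕ) :
    e i ∣ ∑ j ∈ range (i + 1), m j * a j :=
  dvd_sum fun _ hj => dvd_mul_of_dvd_right (e_dvd he (Nat.le_of_lt_succ (mem_range.1 hj))) _

lemma n_pos (he : ∀ i, e i = (range (i + 1)).gcd a) (ha : 0 < a 0) {k : ℕ}
    (hk : n (k + 1) * e (k + 1) = e k) : 0 < n (k + 1) :=
  Nat.pos_of_mul_pos_right (hk ▸ e_pos he ha k)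

lemma n_dvd_of_dvd_mul (he : ∀ i, e i = (range (i + 1)).gcd a) (ha : 0 < a 0) {k : ℕ}
    (hk : n (k + 1) * e (k + 1) = e k) {d : ℤ} (h : (e k : ℤ) ∣ d * a (k + 1)) :
    (n (k + 1) : ℤ) ∣ d := by
  have hgcd : gcd (e k : ℤ) (a (k + 1)) = e (k + 1) := by
    rw [← Int.coe_gcd, Int.gcd_natCast_natCast, Nat.gcd_comm, ← e_succ he]
  rw [mul_comm, ← dvd_gcd_mul_iff_dvd_mul, hgcd, ← hk, Nat.cast_mul, mul_comm (e _ : ℤ)] at h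
  exact Int.dvd_of_mul_dvd_mul_right (Int.natCast_ne_zero.2 (e_pos he ha _).ne') h

def IsReducedRep (n : ℕ → ℕ) (i : ℕ) (m : ℕ → ℕ) : Prop :=
  ∀ j, 0 < j → j ≤ i → m j < n j

lemma IsReducedRep.mono {i i' : ℕ} {m : ℕ → ℕ} (h : IsReducedRep n i m) (hi : i' ≤ i) :
    IsReducedRep n i' m :=
  fun j hj hji => h j hj (hji.trans hi)

theorem eq_of_sum_eq_of_isReducedRep (he : ∀ i, e i = (range (i + 1)).gcd a) (ha : 0 < a 0)
    {i : ℕ} (hn : ∀ k < i, n (k + 1) * e (k + 1) = e k) {m m' : ℕ → ℕ}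
    (hm : IsReducedRep n i m) (hm' : IsReducedRep n i m')
    (h : ∑ j ∈ range (i + 1), m j * a j = ∑ j ∈ range (i + 1), m' j * a j) :
    ∀ j ≤ i, m j = m' j := by
  induction i with
  | zero =>
    intro j hj
    obtain rfl : j = 0 := by omega
    simpa [ha.ne'] using h
  | succ k ih =>
    have hk := hn k k.lt_succ_self
    rw [sum_range_succ _ (k + 1), sum_range_succ _ (k + 1)] at h
    have htop : m (k + 1) = m' (k + 1) := by
      have hdvd : (e k : ℤ) ∣ ((m (k + 1) : ℤ) - m' (k + 1)) * a (k + 1) := by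
        have hdiff : ((m (k + 1) : ℤ) - m' (k + 1)) * a (k + 1) =
            ((∑ j ∈ range (k + 1), m' j * a j : ℕ) : ℤ) -
              (∑ j ∈ range (k + 1), m j * a j : ℕ) := by
          have := congrArg (Nat.cast : ℕ → ℤ) h
          push_cast at this ⊢
          linarith
        rw [hdiff]
        exact dvd_sub (Int.natCast_dvd_natCast.2 (e_dvd_sum he _ k))
          (Int.natCast_dvd_natCast.2 (e_dvd_sum he _ k))
      have hlt := hm (k + 1) k.succ_pos le_rfl
      have hlt' := hm' (k + 1) k.succ_pos le_rfl
      have := Int.eq_zero_of_abs_lt_dvd (n_dvd_of_dvd_mul he ha hk hdvd) (by rw [abs_lt]; omega)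
      omega
    intro j hj
    rcases hj.lt_or_eq with hj | rfl
    · exact ih (fun k' hk' => hn k' (by omega)) (hm.mono k.le_succ) (hm'.mono k.le_succ)
        (by rw [htop] at h; omega) j (by omega)
    · exact htop

lemma exists_sum_eq_of_mem_closure {k m : ℕ} (h : m ∈ AddSubmonoid.closure (a '' Set.Iio k)) :
    ∃ c : ℕ → ℕ, ∑ j ∈ range k, c j * a j = m := by
  have himage : a '' Set.Iio k = Set.range (fun j : Fin k => a j) := by
    ext x; simp [Fin.exists_iff]
  rw [himage] at h
  obtain ⟨c, rfl⟩ := AddSubmonoid.exists_of_mem_closure_range _ m h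
  refine ⟨fun j => if hj : j < k then c ⟨j, hj⟩ else 0, ?_⟩
  rw [← Fin.sum_univ_eq_sum_range (fun j => (if hj : j < k then c ⟨j, hj⟩ else 0) * a j)]
  simp

theorem exists_isReducedRep_sum_eq {i : ℕ} (hnpos : ∀ k < i, 0 < n (k + 1))
    (hfree : ∀ k < i, n (k + 1) * a (k + 1) ∈ AddSubmonoid.closure (a '' Set.Iio (k + 1)))
    (c : ℕ → ℕ) :
    ∃ c' : ℕ → ℕ, IsReducedRep n i c' ∧
      ∑ j ∈ range (i + 1), c' j * a j = ∑ j ∈ range (i + 1), c j * a j := by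
  induction i generalizing c with
  | zero => exact ⟨c, fun j hj hj' => by omega, rfl⟩
  | succ k ih =>
    obtain ⟨d, hd⟩ := exists_sum_eq_of_mem_closure (hfree k k.lt_succ_self)
    set N := n (k + 1)
    obtain ⟨c₀, hc₀, hsum⟩ := ih (fun k' hk' => hnpos k' (by omega))
      (fun k' hk' => hfree k' (by omega)) (fun j => c j + c (k + 1) / N * d j)
    refine ⟨Function.update c₀ (k + 1) (c (k + 1) % N), fun j hj hjk => ?_, ?_⟩
    · rcases hjk.lt_or_eq with hjk | rfl
      · rw [Function.update_of_ne (by omega)]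
        exact hc₀ j hj (by omega)
      · rw [Function.update_self]
        exact Nat.mod_lt _ (hnpos k k.lt_succ_self)
    · rw [sum_range_succ _ (k + 1), sum_range_succ _ (k + 1), Function.update_self,
        sum_congr rfl fun j hj => by rw [Function.update_of_ne (by simp at hj; omega)], hsum]
      simp only [add_mul, sum_add_distrib, mul_assoc, ← mul_sum, hd]
      conv_rhs => rw [← Nat.div_add_mod (c (k + 1)) N]
      ring

/-- The Frobenius number of `⟨a 0, …, a i⟩` relative to the lattice `e i ℤ`. -/
def frobeniusNumber (a n : ℕ → ℕ) (i : ℕ) : ℤ :=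
  ∑ j ∈ Icc 1 i, ((n j : ℤ) - 1) * a j - a 0

lemma frobeniusNumber_succ (k : ℕ) :
    frobeniusNumber a n (k + 1) = frobeniusNumber a n k + ((n (k + 1) : ℤ) - 1) * a (k + 1) := by
  rw [frobeniusNumber, frobeniusNumber, sum_Icc_succ_top (by omega)]
  ring

lemma neg_e_le_frobeniusNumber (he : ∀ i, e i = (range (i + 1)).gcd a) {i : ℕ}
    (hpos : ∀ j ≤ i, 0 < a j) (hn : ∀ k < i, n (k + 1) * e (k + 1) = e k) :
    -(e i : ℤ) ≤ frobeniusNumber a n i := by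
  induction i with
  | zero => simp [frobeniusNumber, e_zero he]
  | succ k ih =>
    have hk := hn k k.lt_succ_self
    have hN : (1 : ℤ) ≤ n (k + 1) := by exact_mod_cast n_pos he (hpos 0 (by omega)) hk
    have hA : (e (k + 1) : ℤ) ≤ a (k + 1) := by
      exact_mod_cast Nat.le_of_dvd (hpos _ le_rfl) (e_dvd he le_rfl)
    have hE : (e k : ℤ) = n (k + 1) * e (k + 1) := by exact_mod_cast hk.symm
    rw [frobeniusNumber_succ]
    nlinarith [ih (fun j hj => hpos j (by omega)) (fun k' hk' => hn k' (by omega))]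

lemma exists_lt_dvd_sub_mul (he : ∀ i, e i = (range (i + 1)).gcd a) (ha : 0 < a 0) {k m : ℕ}
    (hk : n (k + 1) * e (k + 1) = e k) (hm : e (k + 1) ∣ m) :
    ∃ j < n (k + 1), (e k : ℤ) ∣ m - j * a (k + 1) := by
  obtain ⟨s, rfl⟩ := hm
  obtain ⟨b, hb⟩ := e_dvd he (le_refl (k + 1))
  have hN : (0 : ℤ) < n (k + 1) := by exact_mod_cast n_pos he ha hk
  have hbezout : (e (k + 1) : ℤ) =
      a (k + 1) * Nat.gcdA (a (k + 1)) (e k) + e k * Nat.gcdB (a (k + 1)) (e k) := by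
    rw [e_succ he]; exact Nat.gcd_eq_gcd_ab _ _
  set x := Nat.gcdA (a (k + 1)) (e k)
  set y := Nat.gcdB (a (k + 1)) (e k)
  have hdiv := Int.emod_add_mul_ediv (s * x) (n (k + 1))
  have hj0 := Int.emod_nonneg (s * x) hN.ne'
  have hjN := Int.emod_lt_of_pos (s * x) hN
  refine ⟨((s * x) % n (k + 1)).toNat, by omega, b * ((s * x) / n (k + 1)) + y * s, ?_⟩
  rw [Int.natCast_toNat_eq_self.2 hj0]
  push_cast [← hk, hb] at hbezout ⊢
  linear_combination s * hbezout - (e (k + 1) * b : ℤ) * hdiv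

theorem mem_closure_of_frobeniusNumber_lt (he : ∀ i, e i = (range (i + 1)).gcd a) {i : ℕ}
    (hpos : ∀ j ≤ i, 0 < a j) (hn : ∀ k < i, n (k + 1) * e (k + 1) = e k) {m : ℕ}
    (hm : e i ∣ m) (hlt : frobeniusNumber a n i < m) :
    m ∈ AddSubmonoid.closure (a '' Set.Iic i) := by
  have ha : 0 < a 0 := hpos 0 (Nat.zero_le i)
  induction i generalizing m with
  | zero =>
    obtain ⟨t, rfl⟩ := hm
    rw [e_zero he, mul_comm, ← smul_eq_mul]
    exact nsmul_mem (AddSubmonoid.subset_closure (Set.mem_image_of_mem a (Set.mem_Iic.2 le_rfl)))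
      t
  | succ k ih =>
    have hk := hn k k.lt_succ_self
    obtain ⟨j, hjN, hdvd⟩ := exists_lt_dvd_sub_mul he ha hk hm
    have hrest : frobeniusNumber a n k < (m : ℤ) - j * a (k + 1) := by
      have : (j : ℤ) ≤ n (k + 1) - 1 := by omega
      rw [frobeniusNumber_succ] at hlt
      nlinarith
    have hFk := neg_e_le_frobeniusNumber (i := k) he (fun j hj => hpos j (by omega))
      (fun k' hk' => hn k' (by omega))
    obtain ⟨m', hm'⟩ : ∃ m' : ℕ, (m' : ℤ) = m - j * a (k + 1) := by
      obtain ⟨t, ht⟩ := hdvd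
      have : 0 ≤ t := by nlinarith [e_pos he ha k]
      exact ⟨(e k * t).toNat, by rw [ht]; exact Int.toNat_of_nonneg (by positivity)⟩
    have hm'mem := ih (fun j hj => hpos j (by omega)) (fun k' hk' => hn k' (by omega))
      (Int.natCast_dvd_natCast.1 (hm' ▸ hdvd)) (hm' ▸ hrest)
    have hsplit : m = m' + j • a (k + 1) := by
      rw [smul_eq_mul]; omega
    rw [hsplit]
    refine add_mem ?_ (nsmul_mem (AddSubmonoid.subset_closure ?_) j)
    · exact AddSubmonoid.closure_mono (Set.image_mono (Set.Iic_subset_Iic.2 k.le_succ)) hm'mem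
    · exact Set.mem_image_of_mem a (Set.mem_Iic.2 le_rfl)

lemma sum_range_update_zero (f : ℕ → ℕ) (v i : ℕ) :
    ∑ j ∈ range (i + 1), Function.update f 0 v j * a j =
      v * a 0 + ∑ j ∈ Icc 1 i, f j * a j := by
  rw [range_eq_Ico, sum_eq_sum_Ico_succ_bot i.succ_pos, Function.update_self, zero_add,
    Nat.succ_eq_add_one, Ico_add_one_right_eq_Icc]
  exact congrArg _ (sum_congr rfl fun j hj => by
    rw [Function.update_of_ne (Nat.one_le_iff_ne_zero.1 (mem_Icc.1 hj).1)])

theorem frobeniusNumber_not_mem_closure (he : ∀ i, e i = (range (i + 1)).gcd a) {i : ℕ}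
    (hpos : ∀ j ≤ i, 0 < a j) (hn : ∀ k < i, n (k + 1) * e (k + 1) = e k)
    (hfree : ∀ k < i, n (k + 1) * a (k + 1) ∈ AddSubmonoid.closure (a '' Set.Iio (k + 1)))
    {m : ℕ} (hm : (m : ℤ) = frobeniusNumber a n i) :
    m ∉ AddSubmonoid.closure (a '' Set.Iic i) := by
  have ha : 0 < a 0 := hpos 0 (Nat.zero_le i)
  have hnpos : ∀ j, 0 < j → j ≤ i → 0 < n j := fun j hj hji => by
    obtain ⟨k, rfl⟩ : ∃ k, j = k + 1 := ⟨j - 1, by omega⟩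
    exact n_pos he ha (hn k (by omega))
  intro hmem
  rw [← Set.Iio_add_one_eq_Iic] at hmem
  obtain ⟨c, hc⟩ := exists_sum_eq_of_mem_closure hmem
  obtain ⟨c', hc'red, hc'⟩ :=
    exists_isReducedRep_sum_eq (fun k hk => hnpos (k + 1) k.succ_pos hk) hfree c
  rw [hc, ← Function.update_eq_self 0 c', sum_range_update_zero] at hc'
  have hF : ∑ j ∈ Icc 1 i, (n j - 1) * a j = m + a 0 := by
    zify
    rw [hm, frobeniusNumber, sum_congr rfl fun j hj => by
      rw [Nat.cast_sub (hnpos j (mem_Icc.1 hj).1 (mem_Icc.1 hj).2), Nat.cast_one]]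
    ring
  -- `F + a 0` has the two reduced representations `∑ (n j - 1) a j` and `(c' 0 + 1) a 0 + …`.
  have key := eq_of_sum_eq_of_isReducedRep he ha hn
    (m := Function.update (n · - 1) 0 0) (m' := Function.update c' 0 (c' 0 + 1))
    (fun j hj hji => by rw [Function.update_of_ne hj.ne']; have := hnpos j hj hji; omega)
    (fun j hj hji => by rw [Function.update_of_ne hj.ne']; exact hc'red j hj hji)
    (by rw [sum_range_update_zero, sum_range_update_zero, hF, ← hc']; ring)
    0 (Nat.zero_le i)
  simp at key

lemma sInf_setOf_forall_le_mem {S : Set ℕ} {F : ℤ} (hF : -1 ≤ F)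
    (hgt : ∀ m : ℕ, F < m → m ∈ S) (hnot : ∀ m : ℕ, (m : ℤ) = F → m ∉ S) :
    ((sInf {c : ℕ | ∀ m, c ≤ m → m ∈ S} : ℕ) : ℤ) = F + 1 := by
  have hmem : (F + 1).toNat ∈ {c : ℕ | ∀ m, c ≤ m → m ∈ S} := fun m hm => hgt m (by omega)
  have hle : ∀ c ∈ {c : ℕ | ∀ m, c ≤ m → m ∈ S}, (F + 1).toNat ≤ c := by
    intro c hc
    by_contra! hlt
    exact hnot F.toNat (by omega) (hc _ (by omega))
  rw [le_antisymm (Nat.sInf_le hmem) (le_csInf ⟨_, hmem⟩ hle)]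
  omega

theorem conductor_eq (he : ∀ i, e i = (range (i + 1)).gcd a) {g : ℕ}
    (hpos : ∀ j ≤ g, 0 < a j) (hgcd : e g = 1) (hn : ∀ k < g, n (k + 1) * e (k + 1) = e k)
    (hfree : ∀ k < g, n (k + 1) * a (k + 1) ∈ AddSubmonoid.closure (a '' Set.Iio (k + 1))) :
    ((sInf {c : ℕ | ∀ m, c ≤ m → m ∈ AddSubmonoid.closure (a '' Set.Iic g)} : ℕ) : ℤ) =
      frobeniusNumber a n g + 1 :=
  sInf_setOf_forall_le_mem (by simpa [hgcd] using neg_e_le_frobeniusNumber he hpos hn)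
    (fun _ hm => mem_closure_of_frobeniusNumber_lt he hpos hn (hgcd ▸ one_dvd _) hm)
    (fun _ hm => frobeniusNumber_not_mem_closure he hpos hn hfree hm)

end Arithmetic

section Exponents

lemma sum_mul_pow_lt {B K : ℕ} {u : ℕ → ℕ} (hu : ∀ k < K, u k < B) :
    ∑ k ∈ range K, u k * B ^ k < B ^ K := by
  induction K with
  | zero => simp
  | succ K ih =>
    have h₁ := ih fun k hk => hu k (by omega)
    have h₂ : (u K + 1) * B ^ K ≤ B ^ K * B := by
      rw [mul_comm (B ^ K)]; exact Nat.mul_le_mul_right _ (hu K K.lt_succ_self)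
    rw [sum_range_succ, pow_succ]
    linarith

variable {g : ℕ}

lemma embDomain_valEmbedding_apply {M : Type*} [Zero M] (d : Fin g →₀ M) {k : ℕ} (hk : k < g) :
    d.embDomain Fin.valEmbedding k = d ⟨k, hk⟩ :=
  Finsupp.embDomain_apply_self Fin.valEmbedding d ⟨k, hk⟩

lemma filter_le_eq_self {d : Fin (g + 1) →₀ ℕ} {i : ℕ}
    (hd : ∀ j : Fin (g + 1), i < j → d j = 0) :
    d.filter (fun j : Fin (g + 1) => (j : ℕ) ≤ i) = d :=
  (Finsupp.filter_eq_self_iff _ _).2 fun j hj => not_lt.1 fun h => hj (hd j h)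

lemma weight_filter_le_eq_sum (w : ℕ → ℕ) (d : Fin (g + 1) →₀ ℕ) {i : ℕ} (hi : i ≤ g) :
    Finsupp.weight (fun j : Fin (g + 1) => w j) (d.filter fun j => (j : ℕ) ≤ i) =
      ∑ k ∈ range (i + 1), d.embDomain Fin.valEmbedding k * w k := by
  have hrange : range (i + 1) = (range (g + 1)).filter (· ≤ i) := by
    ext k; simp only [mem_range, mem_filter]; omega
  rw [Finsupp.weight_eq_sum, hrange, sum_filter, ← Fin.sum_univ_eq_sum_range
    (fun k => if k ≤ i then d.embDomain Fin.valEmbedding k * w k else 0)]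
  refine sum_congr rfl fun j _ => ?_
  rw [Finsupp.filter_apply, embDomain_valEmbedding_apply d j.isLt]
  split_ifs <;> simp

lemma weight_pow_lt {d : Fin (g + 1) →₀ ℕ} {B i : ℕ} (hi : i ≤ g)
    (hd : ∀ j : Fin (g + 1), i < j → d j = 0) (hB : ∀ j, d j < B) :
    Finsupp.weight (fun j : Fin (g + 1) => B ^ (j : ℕ)) d < B ^ (i + 1) := by
  rw [← filter_le_eq_self hd, weight_filter_le_eq_sum (B ^ ·) d hi]
  exact sum_mul_pow_lt fun k hk => embDomain_valEmbedding_apply d (k := k) (by omega) ▸ hB _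

end Exponents

section MonomialMap

variable {R : Type*} [CommRing R] {σ τ : Type*}

noncomputable def monomialMap (f : (σ →₀ ℕ) →+ (τ →₀ ℕ)) :
    MvPolynomial σ R →ₐ[R] MvPolynomial τ R :=
  AddMonoidAlgebra.mapDomainAlgHom R R f

lemma monomialMap_monomial (f : (σ →₀ ℕ) →+ (τ →₀ ℕ)) (d : σ →₀ ℕ) (r : R) :
    monomialMap f (monomial d r) = monomial (f d) r :=
  AddMonoidAlgebra.mapDomain_single

lemma eq_zero_of_monomialMap_eq_zero {f : (σ →₀ ℕ) →+ (τ →₀ ℕ)} {S : Set (σ →₀ ℕ)}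
    (hf : Set.InjOn f S) {q : MvPolynomial σ R} (hq : ↑q.support ⊆ S)
    (h : monomialMap f q = 0) : q = 0 := by
  refine AddMonoidAlgebra.coeff_injective (Finsupp.mapDomain_injOn S hf hq (by simp) ?_)
  simpa [monomialMap, AddMonoidAlgebra.mapDomain] using congrArg AddMonoidAlgebra.coeff h

end MonomialMap

section Relations

variable {R : Type*} [CommRing R] {g : ℕ} (n : ℕ → ℕ) (c : Fin g → Fin (g + 1) →₀ ℕ)

noncomputable def relation (l : Fin g) : MvPolynomial (Fin (g + 1)) R :=
  X l.succ ^ n l.succ - monomial (c l) 1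

noncomputable def relationIdeal (i : ℕ) : Ideal (MvPolynomial (Fin (g + 1)) R) :=
  Ideal.span (relation n c '' {l | (l : ℕ) < i})

def reducedExponents (i : ℕ) : Set (Fin (g + 1) →₀ ℕ) :=
  {d | ∀ j : Fin (g + 1), 0 < (j : ℕ) → (j : ℕ) ≤ i → d j < n j}

variable {n c}

lemma relationIdeal_self :
    relationIdeal (R := R) n c g = Ideal.span (Set.range (relation n c)) := by
  rw [relationIdeal, ← Set.image_univ]
  congr
  exact Set.eq_univ_of_forall fun l => l.is_lt

lemma monomialMap_relation {τ : Type*} (f : (Fin (g + 1) →₀ ℕ) →+ (τ →₀ ℕ)) (l : Fin g) :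
    monomialMap f (relation (R := R) n c l) =
      monomial (f (Finsupp.single l.succ (n l.succ))) 1 - monomial (f (c l)) 1 := by
  rw [relation, X_pow_eq_monomial, map_sub, monomialMap_monomial, monomialMap_monomial]

lemma monomial_eq_mul_relation_add (l : Fin g) {d : Fin (g + 1) →₀ ℕ}
    (hd : n l.succ ≤ d l.succ) (r : R) :
    monomial d r = monomial (d - Finsupp.single l.succ (n l.succ)) r * relation n c l +
      monomial (d - Finsupp.single l.succ (n l.succ) + c l) r := by
  have hsplit := tsub_add_cancel_of_le (Finsupp.single_le_iff.2 hd)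
  rw [relation, X_pow_eq_monomial, mul_sub, monomial_mul, monomial_mul, mul_one, hsplit]
  ring

lemma weight_pow_reduce_lt {B : ℕ}
    (hc : ∀ (l : Fin g) (j : Fin (g + 1)), (l : ℕ) < j → c l j = 0) (hB : ∀ l j, c l j < B)
    (hnpos : ∀ l : Fin g, 0 < n l.succ) (l : Fin g) {d : Fin (g + 1) →₀ ℕ}
    (hd : n l.succ ≤ d l.succ) :
    Finsupp.weight (fun j : Fin (g + 1) => B ^ (j : ℕ))
        (d - Finsupp.single l.succ (n l.succ) + c l) <
      Finsupp.weight (fun j : Fin (g + 1) => B ^ (j : ℕ)) d := by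
  have hc_lt : Finsupp.weight (fun j : Fin (g + 1) => B ^ (j : ℕ)) (c l) < B ^ (l.succ : ℕ) :=
    weight_pow_lt l.is_lt.le (hc l) (hB l)
  have hsingle : B ^ (l.succ : ℕ) ≤ n l.succ * B ^ (l.succ : ℕ) :=
    Nat.le_mul_of_pos_left _ (hnpos l)
  conv_rhs => rw [← tsub_add_cancel_of_le (Finsupp.single_le_iff.2 hd)]
  rw [map_add, map_add, Finsupp.weight_single, smul_eq_mul]
  omega

lemma exists_sub_monomial_mem_relationIdeal {B : ℕ}
    (hc : ∀ (l : Fin g) (j : Fin (g + 1)), (l : ℕ) < j → c l j = 0) (hB : ∀ l j, c l j < B)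
    (hnpos : ∀ l : Fin g, 0 < n l.succ) (i : ℕ) (d : Fin (g + 1) →₀ ℕ) (r : R) :
    ∃ q : MvPolynomial (Fin (g + 1)) R,
      ↑q.support ⊆ reducedExponents (g := g) n i ∧ monomial d r - q ∈ relationIdeal n c i := by
  induction hM : Finsupp.weight (fun j : Fin (g + 1) => B ^ (j : ℕ)) d
    using Nat.strong_induction_on generalizing d with
  | _ M ih =>
    by_cases hd : d ∈ reducedExponents n i
    · refine ⟨monomial d r, ?_, by simp⟩
      exact (coe_subset.2 support_monomial_subset).trans (by simpa using hd)
    simp only [reducedExponents, Set.mem_ofPred_eq, not_forall, not_lt] at hd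
    obtain ⟨j, hj, hji, hjd⟩ := hd
    obtain ⟨l, rfl⟩ := Fin.exists_succ_eq.2 (Fin.pos_iff_ne_zero.1 hj)
    obtain ⟨q, hq, hmem⟩ := ih _ (hM ▸ weight_pow_reduce_lt hc hB hnpos l hjd) _ rfl
    refine ⟨q, hq, ?_⟩
    rw [monomial_eq_mul_relation_add l hjd r, add_sub_assoc]
    refine add_mem (Ideal.mul_mem_left _ _ (Ideal.subset_span ⟨l, ?_, rfl⟩)) hmem
    rw [Fin.val_succ] at hji
    exact Nat.lt_of_succ_le hji

theorem exists_sub_mem_relationIdeal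
    (hc : ∀ (l : Fin g) (j : Fin (g + 1)), (l : ℕ) < j → c l j = 0)
    (hnpos : ∀ l : Fin g, 0 < n l.succ) (i : ℕ) (p : MvPolynomial (Fin (g + 1)) R) :
    ∃ q : MvPolynomial (Fin (g + 1)) R,
      ↑q.support ⊆ reducedExponents (g := g) n i ∧ p - q ∈ relationIdeal n c i := by
  classical
  obtain ⟨B, hB⟩ : ∃ B, ∀ l j, c l j < B :=
    ⟨univ.sup (fun lj : Fin g × Fin (g + 1) => c lj.1 lj.2) + 1, fun l j =>
      Nat.lt_succ_of_le (le_sup (f := fun lj : Fin g × Fin (g + 1) => c lj.1 lj.2)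
        (mem_univ (l, j)))⟩
  induction p using MvPolynomial.induction_on' with
  | monomial d r => exact exists_sub_monomial_mem_relationIdeal hc hB hnpos i d r
  | add p₁ p₂ ih₁ ih₂ =>
    obtain ⟨q₁, hq₁, h₁⟩ := ih₁
    obtain ⟨q₂, hq₂, h₂⟩ := ih₂
    refine ⟨q₁ + q₂, (coe_subset.2 support_add).trans ?_, ?_⟩
    · rw [coe_union]; exact Set.union_subset hq₁ hq₂
    · rw [add_sub_add_comm]; exact add_mem h₁ h₂

theorem ker_eq_relationIdeal {S : Type*} [CommRing S] [Algebra R S]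
    (hc : ∀ (l : Fin g) (j : Fin (g + 1)), (l : ℕ) < j → c l j = 0)
    (hnpos : ∀ l : Fin g, 0 < n l.succ) {i : ℕ} (φ : MvPolynomial (Fin (g + 1)) R →ₐ[R] S)
    (hrel : ∀ l : Fin g, (l : ℕ) < i → φ (relation n c l) = 0)
    (hinj : ∀ q : MvPolynomial (Fin (g + 1)) R,
      ↑q.support ⊆ reducedExponents (g := g) n i → φ q = 0 → q = 0) :
    RingHom.ker φ = relationIdeal n c i := by
  have hle : relationIdeal n c i ≤ RingHom.ker φ :=
    Ideal.span_le.2 <| Set.image_subset_iff.2 fun l hl => hrel l hl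
  refine le_antisymm (fun p hp => ?_) hle
  obtain ⟨q, hq, hpq⟩ := exists_sub_mem_relationIdeal hc hnpos i p
  have hq0 : q = 0 := by
    refine hinj q hq ?_
    have := hle hpq
    rwa [RingHom.mem_ker, map_sub, RingHom.mem_ker.1 hp, zero_sub, neg_eq_zero] at this
  simpa [hq0] using hpq

end Relations

section Collapse

variable {g : ℕ}

/-- The exponent map of the substitution `X j ↦ X 0 ^ a j` for `j ≤ i`, `X j ↦ X j` for
`i < j`. -/
noncomputable def collapse (a : ℕ → ℕ) (i : ℕ) : (Fin (g + 1) →₀ ℕ) →+ (Fin (g + 1) →₀ ℕ) :=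
  (Finsupp.singleAddHom 0).comp ((Finsupp.weight fun j : Fin (g + 1) => a j).comp
      (Finsupp.filterAddHom fun j : Fin (g + 1) => (j : ℕ) ≤ i)) +
    Finsupp.filterAddHom fun j : Fin (g + 1) => i < (j : ℕ)

variable {a : ℕ → ℕ} {i : ℕ}

lemma collapse_apply (d : Fin (g + 1) →₀ ℕ) :
    collapse a i d = Finsupp.single 0 (Finsupp.weight (fun j : Fin (g + 1) => a j)
      (d.filter fun j : Fin (g + 1) => (j : ℕ) ≤ i)) +
        d.filter fun j : Fin (g + 1) => i < (j : ℕ) :=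
  rfl

lemma collapse_apply_zero (d : Fin (g + 1) →₀ ℕ) :
    collapse a i d 0 = Finsupp.weight (fun j : Fin (g + 1) => a j)
      (d.filter fun j : Fin (g + 1) => (j : ℕ) ≤ i) := by
  simp [collapse_apply]

lemma collapse_apply_of_lt (d : Fin (g + 1) →₀ ℕ) {j : Fin (g + 1)} (hj : i < j) :
    collapse a i d j = d j := by
  have hj0 : j ≠ 0 := by rintro rfl; simp at hj
  simp [collapse_apply, hj, hj0.symm]

lemma collapse_of_forall_eq_zero {d : Fin (g + 1) →₀ ℕ}
    (hd : ∀ j : Fin (g + 1), i < j → d j = 0) :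
    collapse a i d = Finsupp.single 0 (Finsupp.weight (fun j : Fin (g + 1) => a j) d) := by
  rw [collapse_apply, filter_le_eq_self hd, (Finsupp.filter_eq_zero_iff _ _).2 hd, add_zero]

lemma isReducedRep_embDomain {n : ℕ → ℕ} {d : Fin (g + 1) →₀ ℕ} (hd : d ∈ reducedExponents n i)
    (hi : i ≤ g) : IsReducedRep n i (d.embDomain Fin.valEmbedding) := fun k hk hki => by
  rw [embDomain_valEmbedding_apply d (by omega)]
  exact hd ⟨k, by omega⟩ hk hki

theorem injOn_collapse {e n : ℕ → ℕ} (he : ∀ i, e i = (range (i + 1)).gcd a) (ha : 0 < a 0)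
    (hn : ∀ k < i, n (k + 1) * e (k + 1) = e k) (hi : i ≤ g) :
    Set.InjOn (collapse (g := g) a i) (reducedExponents n i) := by
  intro d hd d' hd' h
  ext j
  rcases le_or_gt (j : ℕ) i with hj | hj
  · have hsum := congrArg (· 0) h
    simp only [collapse_apply_zero, weight_filter_le_eq_sum _ _ hi] at hsum
    have := eq_of_sum_eq_of_isReducedRep he ha hn (isReducedRep_embDomain hd hi)
      (isReducedRep_embDomain hd' hi) hsum j hj
    rwa [embDomain_valEmbedding_apply d j.isLt, embDomain_valEmbedding_apply d' j.isLt] at this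
  · rw [← collapse_apply_of_lt d hj, h, collapse_apply_of_lt d' hj]

end Collapse

section RegularSequence

variable {R : Type*} [CommRing R] {g : ℕ}

lemma ofList_take_ofFn (f : Fin g → R) (i : ℕ) :
    Ideal.ofList ((List.ofFn f).take i) = Ideal.span (f '' {l | (l : ℕ) < i}) := by
  refine congrArg Ideal.span (Set.ext fun x => ?_)
  simp only [Set.mem_ofPred_eq, Set.mem_image, List.mem_iff_getElem, List.length_take,
    List.length_ofFn, List.getElem_take, List.getElem_ofFn, Fin.exists_iff, lt_min_iff]
  constructor
  · rintro ⟨k, ⟨hki, hkg⟩, rfl⟩; exact ⟨k, hkg, hki, rfl⟩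
  · rintro ⟨k, hkg, hki, rfl⟩; exact ⟨k, ⟨hki, hkg⟩, rfl⟩

theorem isRegular_ofFn (f : Fin g → R)
    (hreg : ∀ (l : Fin g) (r : R), f l * r ∈ Ideal.span (f '' {l' | (l' : ℕ) < l}) →
      r ∈ Ideal.span (f '' {l' | (l' : ℕ) < l}))
    (hne : Ideal.span (Set.range f) ≠ ⊤) :
    RingTheory.Sequence.IsRegular R (List.ofFn f) := by
  have hsmul (I : Ideal R) : (I • ⊤ : Submodule R R) = I := by
    rw [Ideal.smul_eq_mul, Ideal.mul_top]
  refine ⟨⟨fun i hi => ?_⟩, fun h => hne ?_⟩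
  · rw [isSMulRegular_quotient_iff_mem_of_smul_mem, hsmul, ofList_take_ofFn]
    rw [List.length_ofFn] at hi
    simpa using hreg ⟨i, hi⟩
  · rw [hsmul, ← List.take_length (l := List.ofFn f), ofList_take_ofFn, List.length_ofFn] at h
    simpa [Set.image_univ] using h.symm

end RegularSequence

section FreeRelations

variable {R : Type*} [CommRing R] {g : ℕ} {a e n : ℕ → ℕ} {c : Fin g → Fin (g + 1) →₀ ℕ}

lemma exists_relation_exponent (l : Fin g)
    (h : n l.succ * a l.succ ∈ AddSubmonoid.closure (a '' Set.Iio l.succ)) :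
    ∃ d : Fin (g + 1) →₀ ℕ, (∀ j : Fin (g + 1), (l : ℕ) < j → d j = 0) ∧
      Finsupp.weight (fun j : Fin (g + 1) => a j) d = n l.succ * a l.succ := by
  obtain ⟨m, hm⟩ := exists_sum_eq_of_mem_closure h
  let d : Fin (g + 1) →₀ ℕ :=
    Finsupp.equivFunOnFinite.symm fun j : Fin (g + 1) => if (j : ℕ) ≤ l then m j else 0
  have hd : ∀ j : Fin (g + 1), (l : ℕ) < j → d j = 0 := fun j hj => if_neg (not_le.2 hj)
  refine ⟨d, hd, ?_⟩
  rw [← hm, ← filter_le_eq_self hd, weight_filter_le_eq_sum _ _ l.is_lt.le, Fin.val_succ]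
  refine sum_congr rfl fun k hk => ?_
  rw [embDomain_valEmbedding_apply d (by simp at hk; omega)]
  exact congrArg (· * a k) (if_pos (Nat.le_of_lt_succ (mem_range.1 hk)))

lemma collapse_single_eq_collapse {i : ℕ}
    (hc : ∀ (l : Fin g) (j : Fin (g + 1)), (l : ℕ) < j → c l j = 0)
    (hwt : ∀ l, Finsupp.weight (fun j : Fin (g + 1) => a j) (c l) = n l.succ * a l.succ)
    {l : Fin g} (hl : (l : ℕ) < i) :
    collapse a i (Finsupp.single l.succ (n l.succ)) = collapse a i (c l) := by
  have hsingle : ∀ j : Fin (g + 1), i < j → Finsupp.single l.succ (n l.succ) j = 0 :=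
    fun j hj => Finsupp.single_eq_of_ne (by rintro rfl; rw [Fin.val_succ] at hj; omega)
  rw [collapse_of_forall_eq_zero hsingle,
    collapse_of_forall_eq_zero fun j hj => hc l j (by omega), hwt, Finsupp.weight_single,
    smul_eq_mul]

lemma collapse_single_ne_collapse
    (hc : ∀ (l : Fin g) (j : Fin (g + 1)), (l : ℕ) < j → c l j = 0)
    (hnpos : ∀ l : Fin g, 0 < n l.succ) (l : Fin g) :
    collapse a l (Finsupp.single l.succ (n l.succ)) ≠ collapse a l (c l) := by
  intro h
  have hlt : (l : ℕ) < l.succ := by rw [Fin.val_succ]; omega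
  have := congrArg (· l.succ) h
  simp only [collapse_apply_of_lt _ hlt, Finsupp.single_eq_same, hc l l.succ hlt] at this
  exact (hnpos l).ne' this

theorem ker_collapse_eq_relationIdeal (he : ∀ i, e i = (range (i + 1)).gcd a) (ha : 0 < a 0)
    (hn : ∀ k < g, n (k + 1) * e (k + 1) = e k)
    (hc : ∀ (l : Fin g) (j : Fin (g + 1)), (l : ℕ) < j → c l j = 0)
    (hwt : ∀ l, Finsupp.weight (fun j : Fin (g + 1) => a j) (c l) = n l.succ * a l.succ)
    {i : ℕ} (hi : i ≤ g) :
    RingHom.ker (monomialMap (R := R) (collapse a i)) = relationIdeal n c i :=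
  ker_eq_relationIdeal hc (fun l => n_pos he ha (hn l l.is_lt)) _
    (fun l hl => by rw [monomialMap_relation, collapse_single_eq_collapse hc hwt hl, sub_self])
    (fun _ hq => eq_zero_of_monomialMap_eq_zero
      (injOn_collapse he ha (fun k hk => hn k (by omega)) hi) hq)

theorem mem_relationIdeal_of_relation_mul_mem [IsDomain R]
    (he : ∀ i, e i = (range (i + 1)).gcd a) (ha : 0 < a 0)
    (hn : ∀ k < g, n (k + 1) * e (k + 1) = e k)
    (hc : ∀ (l : Fin g) (j : Fin (g + 1)), (l : ℕ) < j → c l j = 0)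
    (hwt : ∀ l, Finsupp.weight (fun j : Fin (g + 1) => a j) (c l) = n l.succ * a l.succ)
    (l : Fin g) {r : MvPolynomial (Fin (g + 1)) R}
    (h : relation n c l * r ∈ relationIdeal n c l) : r ∈ relationIdeal n c l := by
  rw [← ker_collapse_eq_relationIdeal he ha hn hc hwt l.is_lt.le, RingHom.mem_ker] at h ⊢
  rw [map_mul] at h
  refine (mul_eq_zero.1 h).resolve_left ?_
  rw [monomialMap_relation, sub_eq_zero]
  exact fun heq => collapse_single_ne_collapse hc (fun l => n_pos he ha (hn l l.is_lt)) l
    (monomial_left_injective one_ne_zero heq)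

lemma aeval_X_pow_eq_comp_monomialMap (a : ℕ → ℕ) :
    (aeval (R := R) fun j : Fin (g + 1) => (Polynomial.X : Polynomial R) ^ a j) =
      (uniqueAlgEquiv R Unit).toAlgHom.comp (monomialMap
        ((Finsupp.singleAddHom ()).comp (Finsupp.weight fun j : Fin (g + 1) => a j))) := by
  refine algHom_ext fun j => ?_
  rw [aeval_X, AlgHom.comp_apply, X, monomialMap_monomial]
  simp [Finsupp.weight_single]

theorem ker_aeval_X_pow_eq_relationIdeal (he : ∀ i, e i = (range (i + 1)).gcd a) (ha : 0 < a 0)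
    (hn : ∀ k < g, n (k + 1) * e (k + 1) = e k)
    (hc : ∀ (l : Fin g) (j : Fin (g + 1)), (l : ℕ) < j → c l j = 0)
    (hwt : ∀ l, Finsupp.weight (fun j : Fin (g + 1) => a j) (c l) = n l.succ * a l.succ) :
    RingHom.ker (aeval (R := R) fun j : Fin (g + 1) => (Polynomial.X : Polynomial R) ^ a j) =
      relationIdeal n c g := by
  refine ker_eq_relationIdeal hc (fun l => n_pos he ha (hn l l.is_lt)) _ (fun l _ => ?_)
    (fun q hq h => ?_)
  · rw [aeval_X_pow_eq_comp_monomialMap, AlgHom.comp_apply, monomialMap_relation,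
      AddMonoidHom.comp_apply, AddMonoidHom.comp_apply, hwt, Finsupp.weight_single, smul_eq_mul,
      sub_self, map_zero]
  · rw [aeval_X_pow_eq_comp_monomialMap, AlgHom.comp_apply] at h
    replace h := (map_eq_zero_iff _ (uniqueAlgEquiv R Unit).injective).1 h
    refine eq_zero_of_monomialMap_eq_zero (fun d hd d' hd' hdd' => ?_) hq h
    have hg : ∀ j : Fin (g + 1), g < j → False := fun j hj => by omega
    refine injOn_collapse he ha hn le_rfl hd hd' ?_
    rw [collapse_of_forall_eq_zero fun j hj => (hg j hj).elim,
      collapse_of_forall_eq_zero fun j hj => (hg j hj).elim]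
    exact congrArg _ (Finsupp.single_injective () hdd')

end FreeRelations

end FreeNumericalSemigroup

open FreeNumericalSemigroup

/-- A free numerical semigroup `Γ = ⟨a₀,…,a_g⟩` is a complete intersection:
the kernel of `u_i ↦ t^{a_i}` is generated by a regular sequence of length `g`;
in particular the conductor of `Γ` equals `∑_{i=1}^g (n_i − 1)a_i − a₀ + 1`. -/
theorem stmt3 (g : ℕ) (a : ℕ → ℕ) (hpos : ∀ i, i ≤ g → 0 < a i)
    (e : ℕ → ℕ) (he : ∀ i, e i = (Finset.range (i + 1)).gcd a)
    (hgcd : e g = 1)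
    (n : ℕ → ℕ) (hn : ∀ i, 1 ≤ i → i ≤ g → n i * e i = e (i - 1))
    (hfree : ∀ i, 1 ≤ i → i ≤ g →
      n i * a i ∈ AddSubmonoid.closure (a '' Set.Iio i)) :
    (∃ f : Fin g → MvPolynomial (Fin (g + 1)) ℂ,
      RingHom.ker (MvPolynomial.aeval
          (fun i : Fin (g + 1) => (Polynomial.X : Polynomial ℂ) ^ a i) :
          MvPolynomial (Fin (g + 1)) ℂ →ₐ[ℂ] Polynomial ℂ).toRingHom
        = Ideal.span (Set.range f) ∧
      RingTheory.Sequence.IsRegular (MvPolynomial (Fin (g + 1)) ℂ) (List.ofFn f)) ∧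
    ((sInf {c : ℕ | ∀ m : ℕ, c ≤ m →
        m ∈ AddSubmonoid.closure (a '' Set.Iic g)} : ℕ) : ℤ)
      = ∑ i ∈ Finset.Icc 1 g, ((n i : ℤ) - 1) * a i - a 0 + 1 := by
  have ha : 0 < a 0 := hpos 0 (Nat.zero_le g)
  have hn' : ∀ k < g, n (k + 1) * e (k + 1) = e k := fun k hk => hn (k + 1) k.succ_pos hk
  have hfree' : ∀ k < g, n (k + 1) * a (k + 1) ∈ AddSubmonoid.closure (a '' Set.Iio (k + 1)) :=
    fun k hk => hfree (k + 1) k.succ_pos hk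
  choose c hc hwt using fun l : Fin g => exists_relation_exponent l (hfree' l l.is_lt)
  have hker := ker_aeval_X_pow_eq_relationIdeal (R := ℂ) he ha hn' hc hwt
  rw [relationIdeal_self] at hker
  refine ⟨⟨relation n c, hker, isRegular_ofFn _
    (fun l _ => mem_relationIdeal_of_relation_mul_mem he ha hn' hc hwt l) ?_⟩, ?_⟩
  · rw [← hker]
    exact RingHom.ker_ne_top _
  · rw [conductor_eq he hpos hgcd hn' hfree', frobeniusNumber]
end

section
/- Let Γ be a free numerical semigroup on generators a₀,…,a_g with constants n_i and representation coefficients ℓ_j^{(s)}. Then for every s ≥ 2, the cardinality of the set D′_{ℓ_{s−1}^{(s)}} defined recursively by D′ = I_{ℓ_{s−2}^{(s)}} if ℓ_{s−1}^{(s)} = 0 and D′ = I_{ℓ_{s−2}^{(s)}} ∪ I_{ℓ_{s−1}^{(s)}} otherwise, satisfies |D′_{ℓ_{s−1}^{(s)}}| = a_s / e_s, where e_s = gcd(a₀,…,a_s). Equivalently, for each t ≤ s, |D′_{ℓ_{t−2}^{(s)}}| = (ℓ₀^{(s)}a₀ + ⋯ + ℓ_{t−2}^{(s)}a_{t−2})/(n_{t−1}⋯n_g).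 -/
/-! Every tuple of `D′_{ℓ_{t−1}^{(s)}}` has some coordinate `j` below `ℓ_j^{(s)}`, whereas the tuples
of the second block are translated by `(ℓ₀^{(s)},…,ℓ_{t−1}^{(s)})`; so the two blocks are disjoint and
`|D′_{ℓ_t^{(s)}}| = n_t |D′_{ℓ_{t−1}^{(s)}}| + ℓ_t^{(s)} |D′_{ℓ_{t−1}^{(t)}}|`. Multiplying by
`e_t = e_{t−1} / n_t` and using `n_t a_t = ∑_{j<t} ℓ_j^{(t)} a_j` turns this recursion into the
recursion of the partial sums `∑_{j<t} ℓ_j^{(s)} a_j`, and `e_{t−1} = n_t ⋯ n_G` since `e_G = 1`. -/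

/-- The recursively defined index sets `D′_{ℓ_{t−1}^{(s)}}` (elements are
`t`-tuples, encoded as lists of length `t`), built from the structure constants
`n` and the representation coefficients `ℓ` of a free numerical semigroup. -/
def Dp (n : ℕ → ℕ) (ℓ : ℕ → ℕ → ℕ) : ℕ → ℕ → Finset (List ℕ)
  | _, 0 => ∅
  | _, 1 => ∅
  | s, 2 =>
      ((Finset.range (ℓ s 0)) ×ˢ (Finset.range (n 1))).image
          (fun p => [p.1, p.2]) ∪
      (if ℓ s 1 = 0 then ∅ else
        ((Finset.range (ℓ 1 0)) ×ˢ (Finset.range (ℓ s 1))).image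
          (fun p => [p.1 + ℓ s 0, p.2]))
  | s, (t + 3) =>
      ((Dp n ℓ s (t + 2)) ×ˢ (Finset.range (n (t + 2)))).image
          (fun p => p.1 ++ [p.2]) ∪
      (if ℓ s (t + 2) = 0 then ∅ else
        ((Dp n ℓ (t + 2) (t + 2)) ×ˢ (Finset.range (ℓ s (t + 2)))).image
          (fun p => (List.zipWith (· + ·) p.1 ((List.range (t + 2)).map (ℓ s)))
            ++ [p.2]))

open Finset

section Combinatorics

variable (n : ℕ → ℕ) (ℓ : ℕ → ℕ → ℕ)

theorem Dp_two_eq (s : ℕ) :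
    Dp n ℓ s 2 =
      ((range (ℓ s 0)) ×ˢ (range (n 1))).image (fun p => [p.1, p.2]) ∪
      ((range (ℓ 1 0)) ×ˢ (range (ℓ s 1))).image (fun p => [p.1 + ℓ s 0, p.2]) := by
  rw [Dp]
  split_ifs with h <;> simp [h]

theorem Dp_add_three_eq (s t : ℕ) :
    Dp n ℓ s (t + 3) =
      ((Dp n ℓ s (t + 2)) ×ˢ (range (n (t + 2)))).image (fun p => p.1 ++ [p.2]) ∪
      ((Dp n ℓ (t + 2) (t + 2)) ×ˢ (range (ℓ s (t + 2)))).image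
        (fun p => List.zipWith (· + ·) p.1 ((List.range (t + 2)).map (ℓ s)) ++ [p.2]) := by
  rw [Dp]
  split_ifs with h <;> simp [h]

theorem length_of_mem_Dp {s t : ℕ} {l : List ℕ} (hl : l ∈ Dp n ℓ s t) : l.length = t := by
  induction s, t using Dp.induct generalizing l with
  | case1 | case2 => simp [Dp] at hl
  | case3 s =>
    simp only [Dp_two_eq, mem_union, mem_image] at hl
    rcases hl with ⟨p, -, rfl⟩ | ⟨p, -, rfl⟩ <;> rfl
  | case4 s t ih ih' =>
    simp only [Dp_add_three_eq, mem_union, mem_image, mem_product] at hl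
    rcases hl with ⟨p, hp, rfl⟩ | ⟨p, hp, rfl⟩
    · simp [ih hp.1]
    · simp [ih' hp.1]

theorem exists_getElem_lt_of_mem_Dp {s t : ℕ} {l : List ℕ} (hl : l ∈ Dp n ℓ s t) :
    ∃ j, ∃ hj : j < l.length, l[j] < ℓ s j := by
  induction s, t using Dp.induct generalizing l with
  | case1 | case2 => simp [Dp] at hl
  | case3 s =>
    simp only [Dp_two_eq, mem_union, mem_image, mem_product, mem_range] at hl
    rcases hl with ⟨p, hp, rfl⟩ | ⟨p, hp, rfl⟩
    · exact ⟨0, by simp, hp.1⟩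
    · exact ⟨1, by simp, hp.2⟩
  | case4 s t ih _ =>
    simp only [Dp_add_three_eq, mem_union, mem_image, mem_product, mem_range] at hl
    rcases hl with ⟨p, hp, rfl⟩ | ⟨p, hp, rfl⟩
    · obtain ⟨j, hj, hlt⟩ := ih hp.1
      exact ⟨j, by simp; omega, by rwa [List.getElem_append_left hj]⟩
    · have hlen : (List.zipWith (· + ·) p.1 ((List.range (t + 2)).map (ℓ s))).length = t + 2 := by
        simp [length_of_mem_Dp n ℓ hp.1]
      exact ⟨t + 2, by simp [hlen], by rw [List.getElem_concat_length hlen.symm]; exact hp.2⟩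

theorem card_Dp_two (s : ℕ) : (Dp n ℓ s 2).card = ℓ s 0 * n 1 + ℓ 1 0 * ℓ s 1 := by
  have hdisj : Disjoint
      (((range (ℓ s 0)) ×ˢ (range (n 1))).image (fun p : ℕ × ℕ => [p.1, p.2]))
      (((range (ℓ 1 0)) ×ˢ (range (ℓ s 1))).image (fun p : ℕ × ℕ => [p.1 + ℓ s 0, p.2])) := by
    simp only [disjoint_left, mem_image, mem_product, mem_range]
    rintro _ ⟨p, hp, rfl⟩ ⟨q, -, hq⟩
    simp only [List.cons.injEq] at hq
    omega
  rw [Dp_two_eq, card_union_of_disjoint hdisj, card_image_of_injective, card_image_of_injective,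
    card_product, card_product, card_range, card_range, card_range, card_range]
  · intro p q h
    simp only [List.cons.injEq, and_true] at h
    exact Prod.ext (by omega) h.2
  · intro p q h
    simp only [List.cons.injEq, and_true] at h
    exact Prod.ext h.1 h.2

theorem injOn_zipWith_add (v : List ℕ) :
    Set.InjOn (fun l => List.zipWith (· + ·) l v) {l | l.length = v.length} := by
  intro l hl m hm h
  simp only [Set.mem_ofPred_eq] at hl hm
  refine List.ext_getElem (by omega) fun j hjl hjm => ?_
  have := congrArg (·[j]?) h
  simp only [List.getElem?_zipWith, List.getElem?_eq_getElem hjl, List.getElem?_eq_getElem hjm,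
    List.getElem?_eq_getElem (show j < v.length by omega), Option.some.injEq] at this
  omega

theorem injective_append_singleton {α : Type*} :
    Function.Injective (fun p : List α × α => p.1 ++ [p.2]) := by
  intro p q h
  obtain ⟨h1, h2⟩ := List.append_inj' h rfl
  exact Prod.ext h1 (List.singleton_inj.mp h2)

theorem card_Dp_add_three (s t : ℕ) :
    (Dp n ℓ s (t + 3)).card =
      (Dp n ℓ s (t + 2)).card * n (t + 2) + (Dp n ℓ (t + 2) (t + 2)).card * ℓ s (t + 2) := by
  set v := (List.range (t + 2)).map (ℓ s) with hv
  have hdisj : Disjoint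
      (((Dp n ℓ s (t + 2)) ×ˢ (range (n (t + 2)))).image (fun p => p.1 ++ [p.2]))
      (((Dp n ℓ (t + 2) (t + 2)) ×ˢ (range (ℓ s (t + 2)))).image
        (fun p => List.zipWith (· + ·) p.1 v ++ [p.2])) := by
    simp only [disjoint_left, mem_image, mem_product]
    rintro _ ⟨p, hp, rfl⟩ ⟨q, -, hq⟩
    obtain ⟨j, hj, hlt⟩ := exists_getElem_lt_of_mem_Dp n ℓ hp.1
    obtain ⟨h1, -⟩ := List.append_inj' hq.symm rfl
    simp only [h1, List.getElem_zipWith, hv, List.getElem_map, List.getElem_range] at hlt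
    omega
  have hinj : Set.InjOn (fun p : List ℕ × ℕ => List.zipWith (· + ·) p.1 v ++ [p.2])
      ↑((Dp n ℓ (t + 2) (t + 2)) ×ˢ (range (ℓ s (t + 2)))) := by
    intro p hp q hq h
    simp only [coe_product, Set.mem_prod, mem_coe] at hp hq
    obtain ⟨h1, h2⟩ := List.append_inj' h rfl
    refine Prod.ext (injOn_zipWith_add v ?_ ?_ h1) (List.singleton_inj.mp h2) <;>
      simp [hv, length_of_mem_Dp n ℓ hp.1, length_of_mem_Dp n ℓ hq.1]
  rw [Dp_add_three_eq, card_union_of_disjoint hdisj, card_image_of_injective _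
    injective_append_singleton, card_image_of_injOn hinj, card_product, card_product,
    card_range, card_range]

end Combinatorics

theorem prod_Ioc_mul_eq_of_mul_eq_pred {M : Type*} [CommMonoid M] {n e : ℕ → M} {a b : ℕ}
    (hab : a ≤ b) (h : ∀ i, a < i → i ≤ b → n i * e i = e (i - 1)) :
    (∏ i ∈ Ioc a b, n i) * e b = e a := by
  induction b, hab using Nat.le_induction with
  | base => simp
  | succ b hab ih =>
    rw [prod_Ioc_succ_top hab, mul_assoc, h (b + 1) (by omega) le_rfl, Nat.add_sub_cancel,
      ih fun i hi hib => h i hi (by omega)]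

theorem mul_eq_of_mul_eq_mul_of_factor {c m x y z : ℕ} (hm : m * y = z) (hz : z ≠ 0)
    (h : c * z = m * x) : c * y = x := by
  have hm0 : 0 < m := Nat.pos_of_ne_zero (by rintro rfl; simp_all)
  refine Nat.eq_of_mul_eq_mul_left hm0 ?_
  rw [← h, ← hm]
  ring

section FreeSemigroup

variable {G : ℕ} {a e n : ℕ → ℕ} {ℓ : ℕ → ℕ → ℕ}

theorem card_Dp_mul_e_pred (he0 : e 0 = a 0) (hne : ∀ i, e i ≠ 0)
    (hn : ∀ i, 1 ≤ i → i ≤ G → n i * e i = e (i - 1))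
    (hrep : ∀ i, 1 ≤ i → i ≤ G → n i * a i = ∑ j ∈ range i, ℓ i j * a j)
    {s t : ℕ} (ht : 2 ≤ t) (hts : t ≤ s) (hsG : s ≤ G) :
    (Dp n ℓ s t).card * e (t - 1) = ∑ j ∈ range t, ℓ s j * a j := by
  induction t, ht using Nat.le_induction generalizing s with
  | base =>
    have h1 : ℓ 1 0 * e 1 = a 1 := by
      refine mul_eq_of_mul_eq_mul_of_factor (hn 1 le_rfl (by omega)) (hne 0) ?_
      rw [hrep 1 le_rfl (by omega), sum_range_one, he0]
    rw [card_Dp_two, sum_range_succ, sum_range_one, Nat.add_one_sub_one, ← h1, he0.symm,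
      ← hn 1 le_rfl (by omega)]
    ring
  | succ t ht ih =>
    have hnt := hn t (by omega) (by omega)
    have hdiag : (Dp n ℓ t t).card * e t = a t :=
      mul_eq_of_mul_eq_mul_of_factor hnt (hne _)
        ((ih le_rfl (by omega)).trans (hrep t (by omega) (by omega)).symm)
    obtain ⟨t, rfl⟩ := Nat.exists_eq_add_of_le' ht
    rw [card_Dp_add_three, sum_range_succ, ← ih (by omega) hsG, ← hdiag, Nat.add_sub_cancel,
      ← hnt]
    ring

end FreeSemigroup

theorem stmt6_general (G : ℕ) (a : ℕ → ℕ) (hpos : ∀ i, i ≤ G → 0 < a i)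
    (e : ℕ → ℕ) (he : ∀ i, e i = (Finset.range (i + 1)).gcd a)
    (hgcd : e G = 1)
    (n : ℕ → ℕ) (hn : ∀ i, 1 ≤ i → i ≤ G → n i * e i = e (i - 1))
    (ℓ : ℕ → ℕ → ℕ)
    (hrep : ∀ i, 1 ≤ i → i ≤ G →
      n i * a i = ∑ j ∈ Finset.range i, ℓ i j * a j) :
    ∀ s, 2 ≤ s → s ≤ G →
      (Dp n ℓ s s).card * e s = a s ∧
      ∀ t, 2 ≤ t → t ≤ s →
        (Dp n ℓ s t).card * ∏ j ∈ Finset.Icc t G, n j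
          = ∑ j ∈ Finset.range t, ℓ s j * a j := by
  have he0 : e 0 = a 0 := by simp [he]
  have hne : ∀ i, e i ≠ 0 := fun i =>
    (Nat.pos_of_dvd_of_pos (he i ▸ gcd_dvd (by simp)) (hpos 0 (Nat.zero_le G))).ne'
  intro s hs hsG
  refine ⟨?_, fun t ht hts => ?_⟩
  · exact mul_eq_of_mul_eq_mul_of_factor (hn s (by omega) hsG) (hne _)
      ((card_Dp_mul_e_pred he0 hne hn hrep hs le_rfl hsG).trans (hrep s (by omega) hsG).symm)
  · have hprod : ∏ j ∈ Icc t G, n j = e (t - 1) := by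
      obtain ⟨u, rfl⟩ : ∃ u, t = u + 1 := ⟨t - 1, by omega⟩
      rw [Icc_add_one_left_eq_Ioc, Nat.add_sub_cancel, ← mul_one (∏ j ∈ Ioc u G, n j), ← hgcd]
      exact prod_Ioc_mul_eq_of_mul_eq_pred (by omega) fun i hi hiG => hn i (by omega) hiG
    rw [hprod]
    exact card_Dp_mul_e_pred he0 hne hn hrep ht hts hsG

/-- For a free numerical semigroup `⟨a₀,…,a_G⟩`, `|D′_{ℓ_{s−1}^{(s)}}| = a_s/e_s`,
and more generally `|D′_{ℓ_{t−1}^{(s)}}| = (ℓ₀^{(s)}a₀+⋯+ℓ_{t−1}^{(s)}a_{t−1})/(n_t⋯n_G)`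
(stated multiplicatively to avoid division). -/
theorem stmt6 (G : ℕ) (hG : 2 ≤ G) (a : ℕ → ℕ) (hpos : ∀ i, i ≤ G → 0 < a i)
    (e : ℕ → ℕ) (he : ∀ i, e i = (Finset.range (i + 1)).gcd a)
    (hgcd : e G = 1)
    (n : ℕ → ℕ) (hn : ∀ i, 1 ≤ i → i ≤ G → n i * e i = e (i - 1))
    (ℓ : ℕ → ℕ → ℕ)
    (hrep : ∀ i, 1 ≤ i → i ≤ G →
      n i * a i = ∑ j ∈ Finset.range i, ℓ i j * a j)
    (hℓ : ∀ i j, 1 ≤ j → j < i → i ≤ G → ℓ i j < n j) :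
    ∀ s, 2 ≤ s → s ≤ G →
      (Dp n ℓ s s).card * e s = a s ∧
      ∀ t, 2 ≤ t → t ≤ s →
        (Dp n ℓ s t).card * ∏ j ∈ Finset.Icc t G, n j
          = ∑ j ∈ Finset.range t, ℓ s j * a j :=
  stmt6_general G a hpos e he hgcd n hn ℓ hrep
end

section
/- With the recursive sets as defined for a free numerical semigroup Γ = ⟨a₀,…,a_{g+1}⟩, the cardinality recursion |D′_{ℓ_{t−1}^{(s)}}| = n_{t−1}·|D′_{ℓ_{t−2}^{(s)}}| + ℓ_{t−1}^{(s)}·|D′_{ℓ_{t−2}^{(t−1)}}| holds for all 3 ≤ t ≤ s, and applying it at s = t = g+1 together with n_{g+1}a_{g+1} = ∑_{j≤g} ℓ_j^{(g+1)} a_j yields |D′_{ℓ_g^{(g+1)}}| = a_{g+1}. -/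
lemma Dp_two (n : ℕ → ℕ) (ℓ : ℕ → ℕ → ℕ) (s : ℕ) : Dp n ℓ s 2 =
      ((Finset.range (ℓ s 0)) ×ˢ (Finset.range (n 1))).image
          (fun p => [p.1, p.2]) ∪
      (if ℓ s 1 = 0 then ∅ else
        ((Finset.range (ℓ 1 0)) ×ˢ (Finset.range (ℓ s 1))).image
          (fun p => [p.1 + ℓ s 0, p.2])) := rfl

lemma Dp_succ (n : ℕ → ℕ) (ℓ : ℕ → ℕ → ℕ) (s t : ℕ) : Dp n ℓ s (t+3) =
      ((Dp n ℓ s (t + 2)) ×ˢ (Finset.range (n (t + 2)))).image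
          (fun p => p.1 ++ [p.2]) ∪
      (if ℓ s (t + 2) = 0 then ∅ else
        ((Dp n ℓ (t + 2) (t + 2)) ×ˢ (Finset.range (ℓ s (t + 2)))).image
          (fun p => (List.zipWith (· + ·) p.1 ((List.range (t + 2)).map (ℓ s)))
            ++ [p.2])) := rfl

lemma concat_inj' {l l' : List ℕ} {x y : ℕ} (h : l ++ [x] = l' ++ [y]) :
    l = l' ∧ x = y := by
  simp only [← List.concat_eq_append] at h
  exact List.concat_inj.mp h

lemma Dp_len (n : ℕ → ℕ) (ℓ : ℕ → ℕ → ℕ) :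
    ∀ t s m, m ∈ Dp n ℓ s t → m.length = t := by
  intro t
  induction t using Nat.strong_induction_on with
  | _ t ih =>
    match t with
    | 0 => intro s m hm; simp [Dp] at hm
    | 1 => intro s m hm; simp [Dp] at hm
    | 2 =>
      intro s m hm
      rw [Dp_two, Finset.mem_union] at hm
      rcases hm with hm | hm
      · obtain ⟨p, -, rfl⟩ := Finset.mem_image.mp hm
        rfl
      · split at hm
        · simp at hm
        · obtain ⟨p, -, rfl⟩ := Finset.mem_image.mp hm
          rfl
    | (t + 3) =>
      intro s m hm
      rw [Dp_succ, Finset.mem_union] at hm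
      rcases hm with hm | hm
      · obtain ⟨p, hp, rfl⟩ := Finset.mem_image.mp hm
        rw [Finset.mem_product] at hp
        have := ih (t + 2) (by omega) s p.1 hp.1
        simp [this]
      · split at hm
        · simp at hm
        · obtain ⟨p, hp, rfl⟩ := Finset.mem_image.mp hm
          rw [Finset.mem_product] at hp
          have := ih (t + 2) (by omega) (t + 2) p.1 hp.1
          simp [this]

lemma Dp_inv (n : ℕ → ℕ) (ℓ : ℕ → ℕ → ℕ) :
    ∀ t s m, m ∈ Dp n ℓ s t → ∃ j < t, m.getD j 0 < ℓ s j := by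
  intro t
  induction t using Nat.strong_induction_on with
  | _ t ih =>
    match t with
    | 0 => intro s m hm; simp [Dp] at hm
    | 1 => intro s m hm; simp [Dp] at hm
    | 2 =>
      intro s m hm
      rw [Dp_two, Finset.mem_union] at hm
      rcases hm with hm | hm
      · obtain ⟨p, hp, rfl⟩ := Finset.mem_image.mp hm
        rw [Finset.mem_product, Finset.mem_range, Finset.mem_range] at hp
        exact ⟨0, by omega, hp.1⟩
      · split at hm
        · simp at hm
        · obtain ⟨p, hp, rfl⟩ := Finset.mem_image.mp hm
          rw [Finset.mem_product, Finset.mem_range, Finset.mem_range] at hp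
          exact ⟨1, by omega, hp.2⟩
    | (t + 3) =>
      intro s m hm
      rw [Dp_succ, Finset.mem_union] at hm
      rcases hm with hm | hm
      · obtain ⟨p, hp, rfl⟩ := Finset.mem_image.mp hm
        rw [Finset.mem_product] at hp
        have hlen := Dp_len n ℓ (t + 2) s p.1 hp.1
        obtain ⟨j, hj, hjl⟩ := ih (t + 2) (by omega) s p.1 hp.1
        refine ⟨j, by omega, ?_⟩
        rwa [List.getD_append _ _ _ j (by omega)]
      · split at hm
        · simp at hm
        · obtain ⟨p, hp, rfl⟩ := Finset.mem_image.mp hm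
          rw [Finset.mem_product, Finset.mem_range] at hp
          have hlen := Dp_len n ℓ (t + 2) (t + 2) p.1 hp.1
          have hzl : (List.zipWith (· + ·) p.1
              ((List.range (t + 2)).map (ℓ s))).length = t + 2 := by
            simp [hlen]
          refine ⟨t + 2, by omega, ?_⟩
          rw [List.getD_append_right _ _ _ _ (by omega), hzl]
          simpa using hp.2

lemma zip_getD (ℓ : ℕ → ℕ → ℕ) (s t : ℕ) (l : List ℕ) (hl : l.length = t)
    (j : ℕ) (hj : j < t) :
    (List.zipWith (· + ·) l ((List.range t).map (ℓ s))).getD j 0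
      = l.getD j 0 + ℓ s j := by
  have hzl : (List.zipWith (· + ·) l ((List.range t).map (ℓ s))).length = t := by
    simp [hl]
  rw [List.getD_eq_getElem _ _ (by omega), List.getD_eq_getElem _ _ (by omega),
    List.getElem_zipWith]
  congr 1
  simp

lemma Dp_card_two (n : ℕ → ℕ) (ℓ : ℕ → ℕ → ℕ) (s : ℕ) :
    (Dp n ℓ s 2).card = ℓ s 0 * n 1 + ℓ 1 0 * ℓ s 1 := by
  rw [Dp_two, Finset.card_union_of_disjoint, Finset.card_image_of_injective,
    Finset.card_product, Finset.card_range, Finset.card_range]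
  · congr 1
    split
    · simp [*]
    · rw [Finset.card_image_of_injective, Finset.card_product, Finset.card_range,
        Finset.card_range]
      intro p q h
      simp only [List.cons.injEq, and_true] at h
      exact Prod.ext (by omega) h.2
  · intro p q h
    simp only [List.cons.injEq, and_true] at h
    exact Prod.ext h.1 h.2
  · rw [Finset.disjoint_left]
    rintro m hm hm'
    obtain ⟨p, hp, rfl⟩ := Finset.mem_image.mp hm
    rw [Finset.mem_product, Finset.mem_range, Finset.mem_range] at hp
    split at hm'
    · simp at hm'
    · obtain ⟨q, hq, h⟩ := Finset.mem_image.mp hm'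
      simp only [List.cons.injEq, and_true] at h
      omega

lemma Dp_card_succ (n : ℕ → ℕ) (ℓ : ℕ → ℕ → ℕ) (s t : ℕ) :
    (Dp n ℓ s (t+3)).card
      = (Dp n ℓ s (t+2)).card * n (t+2)
        + (Dp n ℓ (t+2) (t+2)).card * ℓ s (t+2) := by
  rw [Dp_succ, Finset.card_union_of_disjoint, Finset.card_image_of_injOn
      (fun p _ q _ h => Prod.ext (concat_inj' h).1 (concat_inj' h).2),
    Finset.card_product, Finset.card_range]
  · congr 1
    split
    · simp [*]
    · rw [Finset.card_image_of_injOn, Finset.card_product, Finset.card_range]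
      rintro ⟨l, x⟩ hp ⟨l', y⟩ hq h
      rw [Finset.mem_coe, Finset.mem_product] at hp hq
      have hl := Dp_len n ℓ (t+2) (t+2) l hp.1
      have hl' := Dp_len n ℓ (t+2) (t+2) l' hq.1
      have h' := concat_inj' h
      simp only [Prod.mk.injEq]
      refine ⟨?_, h'.2⟩
      have hz := h'.1
      apply List.ext_getElem (by omega)
      intro i h1 h2
      have hi : i < t + 2 := by omega
      have := congrArg (fun u : List ℕ => u.getD i 0) hz
      simp only [zip_getD ℓ s (t+2) l hl i hi, zip_getD ℓ s (t+2) l' hl' i hi] at this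
      have g1 : l.getD i 0 = l[i] := List.getD_eq_getElem l 0 (by omega)
      have g2 : l'.getD i 0 = l'[i]'(by omega) := List.getD_eq_getElem l' 0 (by omega)
      rw [g1, g2] at this
      omega
  · rw [Finset.disjoint_left]
    rintro m hm hm'
    obtain ⟨⟨l, x⟩, hp, h1⟩ := Finset.mem_image.mp hm
    rw [Finset.mem_product] at hp
    split at hm'
    · simp at hm'
    · obtain ⟨⟨l', y⟩, hq, h2⟩ := Finset.mem_image.mp hm'
      rw [Finset.mem_product] at hq
      have hl := Dp_len n ℓ (t+2) s l hp.1
      have hl' := Dp_len n ℓ (t+2) (t+2) l' hq.1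
      have heq : l = List.zipWith (· + ·) l' ((List.range (t+2)).map (ℓ s)) := by
        have h3 : l ++ [x] = List.zipWith (· + ·) l' ((List.range (t+2)).map (ℓ s)) ++ [y] := by
          rw [h1, ← h2]
        exact (List.append_inj h3 (by simp [hl, hl'])).1
      obtain ⟨j, hj, hjl⟩ := Dp_inv n ℓ (t+2) s l hp.1
      rw [heq, zip_getD ℓ s (t+2) l' hl' j hj] at hjl
      omega


/-- The cardinality recursion
`|D′_{ℓ_{t−1}^{(s)}}| = n_{t−1}|D′_{ℓ_{t−2}^{(s)}}| + ℓ_{t−1}^{(s)}|D′_{ℓ_{t−2}^{(t−1)}}|`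
for `3 ≤ t ≤ s`, and its consequence `|D′_{ℓ_g^{(g+1)}}| = a_{g+1}` (here the top
index is `G = g+1`). -/
theorem stmt7 (G : ℕ) (hG : 2 ≤ G) (a : ℕ → ℕ) (hpos : ∀ i, i ≤ G → 0 < a i)
    (e : ℕ → ℕ) (he : ∀ i, e i = (Finset.range (i + 1)).gcd a)
    (hgcd : e G = 1)
    (n : ℕ → ℕ) (hn : ∀ i, 1 ≤ i → i ≤ G → n i * e i = e (i - 1))
    (ℓ : ℕ → ℕ → ℕ)
    (hrep : ∀ i, 1 ≤ i → i ≤ G →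
      n i * a i = ∑ j ∈ Finset.range i, ℓ i j * a j)
    (hℓ : ∀ i j, 1 ≤ j → j < i → i ≤ G → ℓ i j < n j) :
    (∀ s t, 3 ≤ t → t ≤ s → s ≤ G →
      (Dp n ℓ s t).card
        = n (t - 1) * (Dp n ℓ s (t - 1)).card
          + ℓ s (t - 1) * (Dp n ℓ (t - 1) (t - 1)).card) ∧
    (Dp n ℓ G G).card = a G := by
  have epos : ∀ i, 0 < e i := by
    intro i
    have hne : e i ≠ 0 := by
      rw [he]
      intro h0
      have := Finset.gcd_eq_zero_iff.mp h0 0 (Finset.mem_range.mpr (by omega))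
      have := hpos 0 (by omega)
      omega
    omega
  have npos : ∀ i, 1 ≤ i → i ≤ G → 0 < n i := by
    intro i h1 h2
    have hni := hn i h1 h2
    have he1 := epos (i - 1)
    rcases Nat.eq_zero_or_pos (n i) with h0 | h0
    · rw [h0, zero_mul] at hni; omega
    · exact h0
  have key : ∀ t s, 2 ≤ t → t ≤ s → s ≤ G →
      (Dp n ℓ s t).card * e (t - 1) = ∑ j ∈ Finset.range t, ℓ s j * a j := by
    intro t
    induction t with
    | zero => omega
    | succ t ih =>
      intro s h2 hts hsG
      rcases Nat.lt_or_ge t 2 with h | h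
      · have ht : t = 1 := by omega
        subst ht
        have e0 : e 0 = a 0 := by rw [he]; simp
        have h1 : n 1 * e 1 = a 0 := by
          have := hn 1 (by omega) (by omega); simpa [e0] using this
        have h2' : ℓ 1 0 * e 1 = a 1 := by
          have hr := hrep 1 (by omega) (by omega)
          rw [Finset.sum_range_one] at hr
          apply Nat.eq_of_mul_eq_mul_right (hpos 0 (by omega))
          calc ℓ 1 0 * e 1 * a 0 = (ℓ 1 0 * a 0) * e 1 := by ring
            _ = (n 1 * a 1) * e 1 := by rw [← hr]
            _ = a 1 * (n 1 * e 1) := by ring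
            _ = a 1 * a 0 := by rw [h1]
        rw [Dp_card_two, Finset.sum_range_succ, Finset.sum_range_one]
        calc (ℓ s 0 * n 1 + ℓ 1 0 * ℓ s 1) * e (2 - 1)
            = ℓ s 0 * (n 1 * e 1) + ℓ s 1 * (ℓ 1 0 * e 1) := by ring
          _ = ℓ s 0 * a 0 + ℓ s 1 * a 1 := by rw [h1, h2']
      · obtain ⟨u, rfl⟩ : ∃ u, t = u + 2 := ⟨t - 2, by omega⟩
        have hn' : n (u + 2) * e (u + 2) = e (u + 1) := by
          have := hn (u + 2) (by omega) (by omega); simpa using this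
        have ihs := ih s (by omega) (by omega) hsG
        have iht := ih (u + 2) (by omega) (le_refl _) (by omega)
        have hrep' := hrep (u + 2) (by omega) (by omega)
        simp only [show u + 2 - 1 = u + 1 from rfl] at ihs iht
        have hcc : (Dp n ℓ (u + 2) (u + 2)).card * e (u + 2) = a (u + 2) := by
          apply Nat.eq_of_mul_eq_mul_left (npos (u + 2) (by omega) (by omega))
          calc n (u + 2) * ((Dp n ℓ (u + 2) (u + 2)).card * e (u + 2))
              = (Dp n ℓ (u + 2) (u + 2)).card * (n (u + 2) * e (u + 2)) := by ring
            _ = (Dp n ℓ (u + 2) (u + 2)).card * e (u + 1) := by rw [hn']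
            _ = ∑ j ∈ Finset.range (u + 2), ℓ (u + 2) j * a j := iht
            _ = n (u + 2) * a (u + 2) := hrep'.symm
        have h3 : u + 2 + 1 = u + 3 := rfl
        rw [h3, Dp_card_succ, Finset.sum_range_succ]
        calc ((Dp n ℓ s (u + 2)).card * n (u + 2)
              + (Dp n ℓ (u + 2) (u + 2)).card * ℓ s (u + 2)) * e (u + 3 - 1)
            = (Dp n ℓ s (u + 2)).card * (n (u + 2) * e (u + 2))
              + ℓ s (u + 2) * ((Dp n ℓ (u + 2) (u + 2)).card * e (u + 2)) := by
              simp only [show u + 3 - 1 = u + 2 from rfl]; ring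
          _ = (Dp n ℓ s (u + 2)).card * e (u + 1) + ℓ s (u + 2) * a (u + 2) := by
              rw [hn', hcc]
          _ = (∑ j ∈ Finset.range (u + 2), ℓ s j * a j) + ℓ s (u + 2) * a (u + 2) := by
              rw [ihs]
  constructor
  · intro s t h3 hts hsG
    obtain ⟨u, rfl⟩ : ∃ u, t = u + 3 := ⟨t - 3, by omega⟩
    simp only [show u + 3 - 1 = u + 2 from rfl]
    rw [Dp_card_succ]
    ring
  · have hk := key G G hG (le_refl _) (le_refl _)
    have heG : e (G - 1) = n G := by
      have := hn G (by omega) (le_refl _)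
      rw [hgcd] at this; omega
    rw [heG, ← hrep G (by omega) (le_refl _)] at hk
    have hnG := npos G (by omega) (le_refl _)
    have hk2 : (Dp n ℓ G G).card * n G = a G * n G := by rw [hk]; ring
    exact Nat.eq_of_mul_eq_mul_right hnG hk2
end
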